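/- arXiv:2507.22957 — 2 statements merged into one kernel-verified Lean document; each statement's English description precedes it below -/
import Mathlib

section
/- Let G be a graph without isolated vertices and H a dilation of G in which every hyperedge contains at least one additional vertex. Then ν(H) ≤ γ(H) ≤ 2ν(H). -/
open Finset

/-- Two vertices of a hypergraph (given by its finite set of hyperedges) are
adjacent if they are distinct and lie in a common hyperedge. -/
def HypAdj {W : Type*} (E : Finset (Finset W)) (u v : W) : Prop :=
  u ≠ v ∧ ∃ e ∈ E, u ∈ e ∧ v ∈ e

/-- A matching of a hypergraph: a set of pairwise disjoint hyperedges. -/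
def IsHypMatching {W : Type*} (E M : Finset (Finset W)) : Prop :=
  M ⊆ E ∧ ∀ a ∈ M, ∀ b ∈ M, a ≠ b → Disjoint a b

/-- Matching number of a hypergraph. -/
noncomputable def nuH {W : Type*} (E : Finset (Finset W)) : ℕ :=
  sSup {n | ∃ M : Finset (Finset W), IsHypMatching E M ∧ M.card = n}

/-- A transversal (vertex cover) of a hypergraph: meets every hyperedge. -/
def IsTransversal {W : Type*} (E : Finset (Finset W)) (T : Finset W) : Prop :=
  ∀ e ∈ E, ∃ w ∈ T, w ∈ e

/-- Transversal number of a hypergraph. -/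
noncomputable def tauH {W : Type*} (E : Finset (Finset W)) : ℕ :=
  sInf {n | ∃ T : Finset W, IsTransversal E T ∧ T.card = n}

/-- A dominating set of a hypergraph: every vertex outside it is adjacent
(shares a hyperedge) with some vertex inside it. -/
def IsDominatingH {W : Type*} (E : Finset (Finset W)) (D : Finset W) : Prop :=
  ∀ v, v ∉ D → ∃ u ∈ D, HypAdj E u v

/-- Domination number of a hypergraph on the (finite) vertex type `W`. -/
noncomputable def gammaH {W : Type*} (E : Finset (Finset W)) : ℕ :=
  sInf {n | ∃ D : Finset W, IsDominatingH E D ∧ D.card = n}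

/-- The two-element finset associated to an unordered pair. -/
noncomputable def sym2ToFinset {V : Type*} (e : Sym2 V) : Finset V := by
  classical exact Sym2.lift ⟨fun a b => ({a, b} : Finset V), fun a b => Finset.pair_comm a b⟩ e

/-- The edges of a simple graph, viewed as the hyperedges (of size two)
of a 2-uniform hypergraph. -/
noncomputable def graphEdges {V : Type*} [Fintype V] (G : SimpleGraph V) :
    Finset (Finset V) := by
  classical exact ((Finset.univ : Finset (Sym2 V)).filter (· ∈ G.edgeSet)).image sym2ToFinset

/-- A dominating set of a simple graph. -/
def IsDominatingG {V : Type*} (G : SimpleGraph V) (D : Finset V) : Prop :=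
  ∀ v, v ∉ D → ∃ u ∈ D, G.Adj u v

/-- Domination number of a simple graph. -/
noncomputable def gammaG {V : Type*} [Fintype V] (G : SimpleGraph V) : ℕ :=
  sInf {n | ∃ D : Finset V, IsDominatingG G D ∧ D.card = n}

/-- A Berge-`G` hypergraph on vertex type `W`: an injection `i` of the vertices
of `G` and a bijection `f` from the edges of `G` to the hyperedges `EH`,
such that each edge of `G` is embedded in the corresponding hyperedge. -/
structure BergeG {V : Type*} (G : SimpleGraph V) (W : Type*) where
  EH : Finset (Finset W)
  i : V ↪ W
  f : Sym2 V → Finset W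
  f_mem : ∀ ⦃e⦄, e ∈ G.edgeSet → f e ∈ EH
  f_inj : ∀ ⦃e e'⦄, e ∈ G.edgeSet → e' ∈ G.edgeSet → f e = f e' → e = e'
  f_surj : ∀ h ∈ EH, ∃ e ∈ G.edgeSet, f e = h
  contains : ∀ ⦃u v⦄, G.Adj u v → i u ∈ f s(u, v) ∧ i v ∈ f s(u, v)

/-- A dilation of a simple graph `G`, on the vertex type `W`: each vertex `v` of `G`
is blown up to a finset `vset v` containing the support vertex `supp v`, each edge `e`
of `G` gets a (possibly empty) finset `eset e` of additional vertices, all these finsets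
being pairwise disjoint and covering `W`; the hyperedge corresponding to the edge
`e = {u,v}` is `vset u ∪ vset v ∪ eset e`, and all hyperedges have size at most the
rank `k ≥ 3`. -/
structure GraphDilation {V : Type*} (G : SimpleGraph V) (W : Type*) where
  vset : V → Finset W
  supp : V → W
  eset : Sym2 V → Finset W
  k : ℕ
  k_ge : 3 ≤ k
  supp_mem : ∀ v, supp v ∈ vset v
  vset_disj : ∀ ⦃u v : V⦄, u ≠ v → Disjoint (vset u) (vset v)
  eset_disj : ∀ ⦃e f : Sym2 V⦄, e ∈ G.edgeSet → f ∈ G.edgeSet → e ≠ f →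
    Disjoint (eset e) (eset f)
  vset_eset_disj : ∀ (v : V), ∀ ⦃e : Sym2 V⦄, e ∈ G.edgeSet → Disjoint (vset v) (eset e)
  card_le : ∀ ⦃u v : V⦄, G.Adj u v →
    (vset u).card + (vset v).card + (eset s(u, v)).card ≤ k
  cover : ∀ w : W, (∃ v : V, w ∈ vset v) ∨ (∃ e ∈ G.edgeSet, w ∈ eset e)

/-- The hyperedge of a dilation corresponding to an edge `e` of the support graph. -/
noncomputable def GraphDilation.hedge {V W : Type*} {G : SimpleGraph V} (D : GraphDilation G W)
    (e : Sym2 V) : Finset W := by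
  classical exact (sym2ToFinset e).biUnion D.vset ∪ D.eset e

/-- The hyperedge set of a dilation. -/
noncomputable def GraphDilation.edges {V W : Type*} [Fintype V] {G : SimpleGraph V}
    (D : GraphDilation G W) : Finset (Finset W) := by
  classical exact ((Finset.univ : Finset (Sym2 V)).filter (· ∈ G.edgeSet)).image D.hedge


/-!
A dominating set meets every hyperedge of a dilation: an additional vertex of the hyperedge lies
in no other hyperedge, so it is either in the set or dominated from inside that hyperedge. Hence a
dominating set is a transversal, and disjoint hyperedges need distinct vertices of it, so
`ν ≤ γ`. Conversely, for a maximum matching `M` every hyperedge meets a member of `M`, and two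
distinct hyperedges of a dilation meet only inside `vset c` for a common endpoint `c` of their
edges; so the at most `2ν` support vertices of the endpoints of the edges of `M` dominate.
-/

open scoped Classical

section Hypergraph

variable {W : Type*} {E : Finset (Finset W)}

def HasPrivateVertices (E : Finset (Finset W)) : Prop :=
  ∀ h ∈ E, ∃ w ∈ h, ∀ h' ∈ E, w ∈ h' → h' = h

lemma IsHypMatching.card_le_card_of_isTransversal {M : Finset (Finset W)} {T : Finset W}
    (hM : IsHypMatching E M) (hT : IsTransversal E T) : M.card ≤ T.card := by
  refine card_le_card_of_forall_subsingleton (fun h w => w ∈ h) (fun h hh => hT h (hM.1 hh))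
    fun w _ h₁ hh₁ h₂ hh₂ => ?_
  by_contra hne
  exact disjoint_left.mp (hM.2 h₁ hh₁.1 h₂ hh₂.1 hne) hh₁.2 hh₂.2

lemma IsDominatingH.isTransversal (hE : HasPrivateVertices E) {D : Finset W}
    (hD : IsDominatingH E D) : IsTransversal E D := by
  intro h hh
  obtain ⟨w, hwh, hpriv⟩ := hE h hh
  by_cases hwD : w ∈ D
  · exact ⟨w, hwD, hwh⟩
  · obtain ⟨u, huD, -, h', hh', hu, hw⟩ := hD w hwD
    exact ⟨u, huD, hpriv h' hh' hw ▸ hu⟩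

lemma isDominatingH_of_forall_exists_mem {D : Finset W}
    (hD : ∀ v, ∃ h ∈ E, v ∈ h ∧ ∃ u ∈ D, u ∈ h) : IsDominatingH E D := by
  intro v hv
  obtain ⟨h, hh, hvh, u, huD, huh⟩ := hD v
  exact ⟨u, huD, fun huv => hv (huv ▸ huD), h, hh, huh, hvh⟩

lemma isHypMatching_empty (E : Finset (Finset W)) : IsHypMatching E ∅ := by
  simp [IsHypMatching]

lemma zero_mem_matching_cards (E : Finset (Finset W)) :
    0 ∈ {n | ∃ M : Finset (Finset W), IsHypMatching E M ∧ M.card = n} :=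
  ⟨∅, isHypMatching_empty E, rfl⟩

lemma bddAbove_matching_cards (E : Finset (Finset W)) :
    BddAbove {n | ∃ M : Finset (Finset W), IsHypMatching E M ∧ M.card = n} :=
  ⟨E.card, by rintro _ ⟨M, hM, rfl⟩; exact card_le_card hM.1⟩

lemma exists_isHypMatching_card_eq_nuH (E : Finset (Finset W)) :
    ∃ M, IsHypMatching E M ∧ M.card = nuH E :=
  Nat.sSup_mem ⟨0, zero_mem_matching_cards E⟩ (bddAbove_matching_cards E)

lemma IsHypMatching.exists_not_disjoint_of_card_eq_nuH {M : Finset (Finset W)}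
    (hM : IsHypMatching E M) (hcard : M.card = nuH E) {h : Finset W} (hh : h ∈ E)
    (hne : h.Nonempty) : ∃ h' ∈ M, ¬Disjoint h h' := by
  by_contra! hdisj
  have hnotin : h ∉ M := fun hmem => hne.ne_empty (disjoint_self.mp (hdisj h hmem))
  have hM' : IsHypMatching E (insert h M) := by
    refine ⟨insert_subset hh hM.1, ?_⟩
    simp only [mem_insert]
    rintro a (rfl | ha) b (rfl | hb) hab
    exacts [absurd rfl hab, hdisj b hb, (hdisj a ha).symm, hM.2 a ha b hb hab]
  have := le_csSup (bddAbove_matching_cards E) ⟨_, hM', rfl⟩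
  rw [card_insert_of_notMem hnotin, hcard] at this
  exact Nat.not_succ_le_self _ this

lemma nuH_le_card_of_isTransversal {T : Finset W} (hT : IsTransversal E T) :
    nuH E ≤ T.card :=
  csSup_le ⟨0, zero_mem_matching_cards E⟩ fun _ ⟨_, hM, hcard⟩ =>
    hcard ▸ hM.card_le_card_of_isTransversal hT

lemma gammaH_le_card {D : Finset W} (hD : IsDominatingH E D) : gammaH E ≤ D.card :=
  Nat.sInf_le ⟨D, hD, rfl⟩

lemma nuH_le_gammaH (hE : HasPrivateVertices E) (hD : ∃ D, IsDominatingH E D) :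
    nuH E ≤ gammaH E := by
  obtain ⟨D, hD, hcard⟩ : gammaH E ∈ {n | ∃ D, IsDominatingH E D ∧ D.card = n} :=
    Nat.sInf_mem (let ⟨D, hD⟩ := hD; ⟨_, D, hD, rfl⟩)
  exact hcard ▸ nuH_le_card_of_isTransversal (hD.isTransversal hE)

end Hypergraph

lemma mem_sym2ToFinset {V : Type*} {x : V} {e : Sym2 V} : x ∈ sym2ToFinset e ↔ x ∈ e := by
  induction e using Sym2.ind with
  | _ a b => simp [sym2ToFinset, Sym2.mem_iff]

lemma card_biUnion_sym2ToFinset_le {V : Type*} (F : Finset (Sym2 V)) :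
    (F.biUnion sym2ToFinset).card ≤ 2 * F.card := by
  refine (card_biUnion_le_card_mul F sym2ToFinset 2 fun e _ => ?_).trans_eq (mul_comm _ _)
  induction e using Sym2.ind with
  | _ a b => exact card_le_two

namespace GraphDilation

variable {V W : Type*} {G : SimpleGraph V} (D : GraphDilation G W)

lemma mem_hedge {e : Sym2 V} {w : W} :
    w ∈ D.hedge e ↔ (∃ a ∈ e, w ∈ D.vset a) ∨ w ∈ D.eset e := by
  simp [hedge, mem_sym2ToFinset]

lemma mem_edges [Fintype V] {h : Finset W} : h ∈ D.edges ↔ ∃ e ∈ G.edgeSet, D.hedge e = h := by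
  simp [edges]

lemma supp_mem_hedge {e : Sym2 V} {v : V} (hv : v ∈ e) : D.supp v ∈ D.hedge e :=
  D.mem_hedge.mpr (Or.inl ⟨v, hv, D.supp_mem v⟩)

lemma hedge_nonempty (e : Sym2 V) : (D.hedge e).Nonempty :=
  ⟨_, D.supp_mem_hedge (Sym2.out_fst_mem e)⟩

lemma exists_mem_hedge (hiso : ∀ v : V, ∃ u : V, G.Adj v u) (w : W) :
    ∃ e ∈ G.edgeSet, w ∈ D.hedge e := by
  rcases D.cover w with ⟨v, hv⟩ | ⟨e, he, hw⟩
  · obtain ⟨u, hvu⟩ := hiso v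
    exact ⟨s(v, u), hvu, D.mem_hedge.mpr (Or.inl ⟨v, Sym2.mem_mk_left v u, hv⟩)⟩
  · exact ⟨e, he, D.mem_hedge.mpr (Or.inr hw)⟩

lemma eq_of_mem_eset_of_mem_hedge {e e' : Sym2 V} (he : e ∈ G.edgeSet) (he' : e' ∈ G.edgeSet)
    {w : W} (hw : w ∈ D.eset e) (hw' : w ∈ D.hedge e') : e' = e := by
  rcases D.mem_hedge.mp hw' with ⟨a, -, hwa⟩ | hwe'
  · exact absurd hw (disjoint_left.mp (D.vset_eset_disj a he) hwa)
  · by_contra hne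
    exact disjoint_left.mp (D.eset_disj he' he hne) hwe' hw

lemma exists_mem_of_not_disjoint_hedge {e e' : Sym2 V} (he : e ∈ G.edgeSet)
    (he' : e' ∈ G.edgeSet) (hmeet : ¬Disjoint (D.hedge e) (D.hedge e')) :
    ∃ c, c ∈ e ∧ c ∈ e' := by
  rcases eq_or_ne e e' with rfl | hne
  · exact ⟨_, Sym2.out_fst_mem e, Sym2.out_fst_mem e⟩
  obtain ⟨x, hx, hx'⟩ := not_disjoint_iff.mp hmeet
  rcases D.mem_hedge.mp hx with ⟨a, ha, hxa⟩ | hxe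
  · rcases D.mem_hedge.mp hx' with ⟨a', ha', hxa'⟩ | hxe'
    · obtain rfl : a = a' := by
        by_contra haa'
        exact disjoint_left.mp (D.vset_disj haa') hxa hxa'
      exact ⟨a, ha, ha'⟩
    · exact absurd hxe' (disjoint_left.mp (D.vset_eset_disj a he') hxa)
  · exact absurd (D.eq_of_mem_eset_of_mem_hedge he he' hxe hx') hne.symm

lemma hedge_injOn (hadd : ∀ e ∈ G.edgeSet, (D.eset e).Nonempty) :
    Set.InjOn D.hedge G.edgeSet := by
  intro e he e' he' heq
  obtain ⟨w, hw⟩ := hadd e he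
  exact (D.eq_of_mem_eset_of_mem_hedge he he' hw (heq ▸ D.mem_hedge.mpr (Or.inr hw))).symm

lemma hasPrivateVertices [Fintype V] (hadd : ∀ e ∈ G.edgeSet, (D.eset e).Nonempty) :
    HasPrivateVertices D.edges := by
  rintro _ hh
  obtain ⟨e, he, rfl⟩ := D.mem_edges.mp hh
  obtain ⟨w, hw⟩ := hadd e he
  refine ⟨w, D.mem_hedge.mpr (Or.inr hw), fun h' hh' hw' => ?_⟩
  obtain ⟨e', he', rfl⟩ := D.mem_edges.mp hh'
  rw [D.eq_of_mem_eset_of_mem_hedge he he' hw hw']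

variable [Fintype V]

noncomputable def edgesIn (M : Finset (Finset W)) : Finset (Sym2 V) :=
  univ.filter fun e => e ∈ G.edgeSet ∧ D.hedge e ∈ M

lemma card_edgesIn_le (hadd : ∀ e ∈ G.edgeSet, (D.eset e).Nonempty) (M : Finset (Finset W)) :
    (D.edgesIn M).card ≤ M.card :=
  card_le_card_of_injOn D.hedge (fun _ he => (mem_filter.mp he).2.2)
    ((D.hedge_injOn hadd).mono fun _ he => (mem_filter.mp he).2.1)

lemma isDominatingH_image_supp (hiso : ∀ v : V, ∃ u : V, G.Adj v u) {M : Finset (Finset W)}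
    (hM : M ⊆ D.edges) (hmax : ∀ h ∈ D.edges, ∃ h' ∈ M, ¬Disjoint h h') :
    IsDominatingH D.edges (((D.edgesIn M).biUnion sym2ToFinset).image D.supp) := by
  refine isDominatingH_of_forall_exists_mem fun w => ?_
  obtain ⟨e, he, hw⟩ := D.exists_mem_hedge hiso w
  have hhe : D.hedge e ∈ D.edges := D.mem_edges.mpr ⟨e, he, rfl⟩
  obtain ⟨_, hh', hmeet⟩ := hmax _ hhe
  obtain ⟨e', he', rfl⟩ := D.mem_edges.mp (hM hh')
  obtain ⟨c, hce, hce'⟩ := D.exists_mem_of_not_disjoint_hedge he he' hmeet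
  refine ⟨_, hhe, hw, D.supp c, mem_image_of_mem _ ?_, D.supp_mem_hedge hce⟩
  exact mem_biUnion.mpr ⟨e', mem_filter.mpr ⟨mem_univ _, he', hh'⟩, mem_sym2ToFinset.mpr hce'⟩

end GraphDilation

theorem dilation_nu_le_gamma_le_two_nu {V W : Type*} [Fintype V] (G : SimpleGraph V)
    (hiso : ∀ v : V, ∃ u : V, G.Adj v u)
    (D : GraphDilation G W) (hadd : ∀ e ∈ G.edgeSet, (D.eset e).Nonempty) :
    nuH D.edges ≤ gammaH D.edges ∧ gammaH D.edges ≤ 2 * nuH D.edges := by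
  obtain ⟨M, hM, hcard⟩ := exists_isHypMatching_card_eq_nuH D.edges
  have hdom := D.isDominatingH_image_supp hiso hM.1 fun h hh =>
    hM.exists_not_disjoint_of_card_eq_nuH hcard hh <| by
      obtain ⟨e, -, rfl⟩ := D.mem_edges.mp hh
      exact D.hedge_nonempty e
  refine ⟨nuH_le_gammaH (D.hasPrivateVertices hadd) ⟨_, hdom⟩, ?_⟩
  calc gammaH D.edges ≤ _ := gammaH_le_card hdom
    _ ≤ ((D.edgesIn M).biUnion sym2ToFinset).card := card_image_le
    _ ≤ 2 * (D.edgesIn M).card := card_biUnion_sym2ToFinset_le _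
    _ ≤ 2 * nuH D.edges := hcard ▸ Nat.mul_le_mul_left 2 (D.card_edgesIn_le hadd M)
end

section
/- For every integers n ≥ 2 and 2 ≤ r ≤ n − 1, the graph G'_r obtained from the complete graph K_{2n} by deleting all edges within a fixed set of r vertices satisfies ν(G'_r) = n and τ(G'_r) = 2n − r. -/
open Finset

/-!
Pairing `n` vertices outside `S` with the other `n` vertices gives a perfect matching.
Every edge has an endpoint outside `S`, so `Sᶜ` is a vertex cover. Conversely, the complement
of a vertex cover is an independent set, and an independent set of `G'_r` either lies in `S`
or is a single vertex, hence has at most `r` vertices.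
-/

section Hypergraph

variable {W : Type*} {E : Finset (Finset W)}

lemma nuH_eq_of_isHypMatching {M : Finset (Finset W)} (hM : IsHypMatching E M)
    (hmax : ∀ N, IsHypMatching E N → #N ≤ #M) : nuH E = #M := by
  have hub : #M ∈ upperBounds {n | ∃ N, IsHypMatching E N ∧ #N = n} := by
    rintro _ ⟨N, hN, rfl⟩
    exact hmax N hN
  exact le_antisymm (csSup_le ⟨_, M, hM, rfl⟩ hub) (le_csSup ⟨_, hub⟩ ⟨M, hM, rfl⟩)

lemma tauH_eq_of_isTransversal {T : Finset W} (hT : IsTransversal E T)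
    (hmin : ∀ T', IsTransversal E T' → #T ≤ #T') : tauH E = #T := by
  refine le_antisymm (Nat.sInf_le ⟨T, hT, rfl⟩) (le_csInf ⟨_, T, hT, rfl⟩ ?_)
  rintro _ ⟨T', hT', rfl⟩
  exact hmin T' hT'

end Hypergraph

lemma sym2ToFinset_mk {V : Type*} [DecidableEq V] (a b : V) : sym2ToFinset s(a, b) = {a, b} := by
  ext x
  simp [sym2ToFinset]

section GraphEdges

variable {V : Type*} [Fintype V] [DecidableEq V] {G : SimpleGraph V}

lemma mem_graphEdges {e : Finset V} : e ∈ graphEdges G ↔ ∃ u v, G.Adj u v ∧ e = {u, v} := by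
  simp only [graphEdges, mem_image, mem_filter, mem_univ, true_and]
  constructor
  · rintro ⟨s, hs, rfl⟩
    induction s using Sym2.ind with
    | _ a b => exact ⟨a, b, hs, sym2ToFinset_mk a b⟩
  · rintro ⟨u, v, huv, rfl⟩
    exact ⟨s(u, v), huv, sym2ToFinset_mk u v⟩

lemma isTransversal_graphEdges_iff {T : Finset V} :
    IsTransversal (graphEdges G) T ↔ ∀ u v, G.Adj u v → u ∈ T ∨ v ∈ T := by
  simp only [IsTransversal, mem_graphEdges]
  constructor
  · intro hT u v huv
    obtain ⟨w, hwT, hw⟩ := hT _ ⟨u, v, huv, rfl⟩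
    rcases mem_insert.mp hw with rfl | hw
    · exact Or.inl hwT
    · exact Or.inr (mem_singleton.mp hw ▸ hwT)
  · rintro hT _ ⟨u, v, huv, rfl⟩
    rcases hT u v huv with hu | hv
    · exact ⟨u, hu, mem_insert_self u _⟩
    · exact ⟨v, hv, mem_insert_of_mem (mem_singleton_self v)⟩

lemma two_mul_card_le_of_isHypMatching_graphEdges {M : Finset (Finset V)}
    (hM : IsHypMatching (graphEdges G) M) : 2 * #M ≤ Fintype.card V := by
  obtain ⟨hsub, hdisj⟩ := hM
  have hcard : ∀ e ∈ M, #e = 2 := by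
    intro e he
    obtain ⟨u, v, huv, rfl⟩ := mem_graphEdges.mp (hsub he)
    exact card_pair huv.ne
  calc 2 * #M = #(M.biUnion fun e => e) := by
        rw [card_biUnion hdisj, sum_congr rfl hcard, sum_const, smul_eq_mul, mul_comm]
    _ ≤ Fintype.card V := card_le_univ _

lemma exists_isHypMatching_graphEdges_of_forall_adj {A B : Finset V} (hAB : Disjoint A B)
    (hcard : #A = #B) (hadj : ∀ a ∈ A, ∀ b ∈ B, G.Adj a b) :
    ∃ M, IsHypMatching (graphEdges G) M ∧ #M = #A := by
  let σ : A ≃ B := Fintype.equivOfCardEq (by simpa using hcard)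
  have hne : ∀ a a' : A, (a : V) ≠ σ a' := fun a a' h =>
    disjoint_left.mp hAB a.2 (h ▸ (σ a').2)
  refine ⟨A.attach.image fun a : A => {(a : V), (σ a : V)}, ⟨fun e he => ?_, ?_⟩, ?_⟩
  · obtain ⟨a, -, rfl⟩ := mem_image.mp he
    exact mem_graphEdges.mpr ⟨a, σ a, hadj a a.2 _ (σ a).2, rfl⟩
  · intro e he e' he' hne'
    obtain ⟨a, -, rfl⟩ := mem_image.mp he
    obtain ⟨a', -, rfl⟩ := mem_image.mp he'
    have haa' : a ≠ a' := fun h => hne' (h ▸ rfl)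
    simp only [disjoint_insert_left, disjoint_insert_right, disjoint_singleton, mem_insert,
      mem_singleton, not_or]
    exact ⟨⟨fun h => haa' (Subtype.ext h.symm), hne a' a⟩, hne a a',
      fun h => haa' (σ.injective (Subtype.ext h))⟩
  · refine (card_image_of_injective _ fun a a' h => ?_).trans card_attach
    rcases mem_insert.mp ((Finset.ext_iff.mp h a).mp (mem_insert_self _ _)) with h | h
    · exact Subtype.ext h
    · exact absurd (mem_singleton.mp h) (hne a a')

end GraphEdges

section CompleteMinusClique

variable {V : Type*} [Fintype V] [DecidableEq V] {G : SimpleGraph V} {S : Finset V}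

lemma isTransversal_graphEdges_compl (hG : ∀ u v, G.Adj u v ↔ u ≠ v ∧ ¬(u ∈ S ∧ v ∈ S)) :
    IsTransversal (graphEdges G) Sᶜ := by
  refine isTransversal_graphEdges_iff.mpr fun u v huv => ?_
  have := (hG u v).mp huv
  simp only [mem_compl]
  tauto

lemma card_compl_le_of_isTransversal (hG : ∀ u v, G.Adj u v ↔ u ≠ v ∧ ¬(u ∈ S ∧ v ∈ S))
    (hS : S.Nonempty) {T : Finset V} (hT : IsTransversal (graphEdges G) T) : #Sᶜ ≤ #T := by
  have hindep : ∀ u ∉ T, ∀ v ∉ T, u ≠ v → u ∈ S ∧ v ∈ S := fun u hu v hv huv => by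
    by_contra h
    have := isTransversal_graphEdges_iff.mp hT u v ((hG u v).mpr ⟨huv, h⟩)
    tauto
  have hTc : #Tᶜ ≤ #S := by
    by_cases hsub : Tᶜ ⊆ S
    · exact card_le_card hsub
    · obtain ⟨u, hu, huS⟩ := not_subset.mp hsub
      have : Tᶜ ⊆ {u} := fun v hv => mem_singleton.mpr <| by_contra fun hne =>
        huS (hindep u (mem_compl.mp hu) v (mem_compl.mp hv) (Ne.symm hne)).1
      exact (card_le_card this).trans (card_singleton u ▸ hS.card_pos)
  rw [card_compl] at hTc ⊢
  omega

lemma exists_isHypMatching_card_eq (hG : ∀ u v, G.Adj u v ↔ u ≠ v ∧ ¬(u ∈ S ∧ v ∈ S))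
    {n : ℕ} (hV : Fintype.card V = 2 * n) (hSn : #S ≤ n) :
    ∃ M, IsHypMatching (graphEdges G) M ∧ #M = n := by
  obtain ⟨R, hRS, hR⟩ := exists_subset_card_eq (s := Sᶜ) (n := n)
    (by rw [card_compl]; omega)
  have hRc : #Rᶜ = #R := by rw [card_compl]; omega
  have hadj : ∀ a ∈ Rᶜ, ∀ b ∈ R, G.Adj a b := fun a ha b hb => (hG a b).mpr
    ⟨fun h => mem_compl.mp ha (h ▸ hb), fun h => mem_compl.mp (hRS hb) h.2⟩
  obtain ⟨M, hM, hMcard⟩ :=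
    exists_isHypMatching_graphEdges_of_forall_adj disjoint_compl_left hRc hadj
  exact ⟨M, hM, hMcard.trans (hRc.trans hR)⟩

end CompleteMinusClique

theorem nu_tau_complete_minus_clique_general (n r : ℕ) (hr : 2 ≤ r)
    (hrn : r ≤ n - 1)
    (S : Finset (Fin (2 * n))) (hS : S.card = r)
    (G' : SimpleGraph (Fin (2 * n)))
    (hG' : ∀ u v : Fin (2 * n), G'.Adj u v ↔ u ≠ v ∧ ¬(u ∈ S ∧ v ∈ S)) :
    nuH (graphEdges G') = n ∧ tauH (graphEdges G') = 2 * n - r := by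
  have hV : Fintype.card (Fin (2 * n)) = 2 * n := Fintype.card_fin _
  constructor
  · obtain ⟨M, hM, hMcard⟩ := exists_isHypMatching_card_eq hG' hV (by omega)
    rw [nuH_eq_of_isHypMatching hM fun N hN => ?_, hMcard]
    have := two_mul_card_le_of_isHypMatching_graphEdges hN
    omega
  · have hSne : S.Nonempty := card_pos.mp (by omega)
    rw [tauH_eq_of_isTransversal (isTransversal_graphEdges_compl hG')
      fun T hT => card_compl_le_of_isTransversal hG' hSne hT, card_compl, hV, hS]

theorem nu_tau_complete_minus_clique (n r : ℕ) (hn : 2 ≤ n) (hr : 2 ≤ r)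
    (hrn : r ≤ n - 1)
    (S : Finset (Fin (2 * n))) (hS : S.card = r)
    (G' : SimpleGraph (Fin (2 * n)))
    (hG' : ∀ u v : Fin (2 * n), G'.Adj u v ↔ u ≠ v ∧ ¬(u ∈ S ∧ v ∈ S)) :
    nuH (graphEdges G') = n ∧ tauH (graphEdges G') = 2 * n - r :=
  nu_tau_complete_minus_clique_general n r hr hrn S hS G' hG'
end
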